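/- The Gödel spacetime is not pseudosymmetric: at every point of ℝ⁴ the (0,6)-tensors R·R and Q(g,R) are linearly independent; in particular there is no real number L with R·R = L·Q(g,R) at any point. -/
import Mathlib


noncomputable section

open scoped BigOperators

/-- A point of `ℝⁿ`. -/
abbrev Pt (n : ℕ) := Fin n → ℝ
/-- A (0,2)-tensor field on `ℝⁿ`, given by its components. -/
abbrev Ten2 (n : ℕ) := Pt n → Fin n → Fin n → ℝ
/-- A (0,4)-tensor field on `ℝⁿ`, given by its components. -/
abbrev Ten4 (n : ℕ) := Pt n → Fin n → Fin n → Fin n → Fin n → ℝ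

variable {n : ℕ}

/-- Partial derivative `∂ᵢ f` at `x`. -/
def pderiv (i : Fin n) (f : Pt n → ℝ) (x : Pt n) : ℝ :=
  fderiv ℝ f x (Pi.single i 1)

/-- Components `g^{ij}` of the inverse of the metric. -/
def ginv (g : Ten2 n) (x : Pt n) (i j : Fin n) : ℝ :=
  (Matrix.of (g x))⁻¹ i j

/-- Christoffel symbols of the second kind, `Γ^h_{ij}` as a function of the point. -/
def christoffel (g : Ten2 n) (h i j : Fin n) (x : Pt n) : ℝ :=
  (1/2) * ∑ l, ginv g x h l *
    (pderiv i (fun y => g y l j) x + pderiv j (fun y => g y i l) x - pderiv l (fun y => g y i j) x)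

/-- Curvature components `R^h_{ijk}`. -/
def curvUp (g : Ten2 n) (h i j k : Fin n) (x : Pt n) : ℝ :=
  pderiv j (christoffel g h i k) x - pderiv k (christoffel g h i j) x
    + ∑ l, christoffel g h j l x * christoffel g l i k x
    - ∑ l, christoffel g h k l x * christoffel g l i j x

/-- The (0,4) Riemann–Christoffel curvature tensor `R_{hijk} = g_{hl} R^l_{ijk}`. -/
def riemann (g : Ten2 n) : Ten4 n := fun x h i j k => ∑ l, g x h l * curvUp g l i j k x

/-- The Ricci tensor `S_{ij} = R^k_{ikj}`. -/
def ricci (g : Ten2 n) : Ten2 n := fun x i j => ∑ k, curvUp g k i k j x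

/-- The scalar curvature `κ = g^{ij} S_{ij}`. -/
def scalarCurv (g : Ten2 n) (x : Pt n) : ℝ := ∑ i, ∑ j, ginv g x i j * ricci g x i j

/-- Components `S_{ij,k}` of the covariant derivative of the Ricci tensor. -/
def ricciCov (g : Ten2 n) (x : Pt n) (i j k : Fin n) : ℝ :=
  pderiv k (fun y => ricci g y i j) x
    - ∑ l, christoffel g l k i x * ricci g x l j
    - ∑ l, christoffel g l k j x * ricci g x i l

/-- The Kulkarni–Nomizu product of two symmetric (0,2)-tensors. -/
def kn (A B : Ten2 n) : Ten4 n := fun x X1 X2 X3 X4 =>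
  A x X1 X4 * B x X2 X3 + A x X2 X3 * B x X1 X4 - A x X1 X3 * B x X2 X4 - A x X2 X4 * B x X1 X3

/-- The Gaussian curvature tensor `G = (1/2) g ∧ g`. -/
def Gten (g : Ten2 n) : Ten4 n := fun x i j k l => (1/2) * kn g g x i j k l

/-- The Weyl conformal curvature tensor
`C = R − (1/(n−2)) g∧S + (κ/((n−2)(n−1))) G`. -/
def weyl (g : Ten2 n) : Ten4 n := fun x h i j k =>
  riemann g x h i j k - (1/((n:ℝ)-2)) * kn g (ricci g) x h i j k
    + (scalarCurv g x / (((n:ℝ)-2)*((n:ℝ)-1))) * Gten g x h i j k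

/-- The conharmonic curvature tensor `conh(R) = R − (1/(n−2)) g∧S`. -/
def conh (g : Ten2 n) : Ten4 n := fun x h i j k =>
  riemann g x h i j k - (1/((n:ℝ)-2)) * kn g (ricci g) x h i j k

/-- The concircular curvature tensor `K = R − (κ/(n(n−1))) G`. -/
def concirc (g : Ten2 n) : Ten4 n := fun x h i j k =>
  riemann g x h i j k - (scalarCurv g x / ((n:ℝ)*((n:ℝ)-1))) * Gten g x h i j k

/-- The (0,6)-tensor `T·T'` for (0,4)-tensors `T, T'`: the curvature-type tensor `T`
acts as a derivation (through the endomorphisms `𝒯(X,Y)` with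
`g(𝒯(X,Y)Z,W) = T(X,Y,Z,W)`) on the (0,4)-tensor `T'`. -/
def dot44 (g : Ten2 n) (T T' : Ten4 n) :
    Pt n → Fin n → Fin n → Fin n → Fin n → Fin n → Fin n → ℝ :=
  fun x h i j k l m =>
  -(∑ r, ∑ s, ginv g x r s *
    (T x l m h s * T' x r i j k + T x l m i s * T' x h r j k
      + T x l m j s * T' x h i r k + T x l m k s * T' x h i j r))

/-- The (0,4)-tensor `T·A` for a (0,4)-tensor `T` acting on a (0,2)-tensor `A`. -/
def dot42 (g : Ten2 n) (T : Ten4 n) (A : Ten2 n) :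
    Pt n → Fin n → Fin n → Fin n → Fin n → ℝ :=
  fun x i j l m =>
  -(∑ r, ∑ s, ginv g x r s * (T x l m i s * A x r j + T x l m j s * A x i r))

/-- The Tachibana tensor `Q(A,T')` of a symmetric (0,2)-tensor `A`
and a (0,4)-tensor `T'`, built from the endomorphisms `X ∧_A Y`. -/
def tach4 (A : Ten2 n) (T' : Ten4 n) :
    Pt n → Fin n → Fin n → Fin n → Fin n → Fin n → Fin n → ℝ :=
  fun x h i j k l m =>
  -((A x m h * T' x l i j k - A x l h * T' x m i j k)
    + (A x m i * T' x h l j k - A x l i * T' x h m j k)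
    + (A x m j * T' x h i l k - A x l j * T' x h i m k)
    + (A x m k * T' x h i j l - A x l k * T' x h i j m))

/-- The Tachibana tensor `Q(A,B)` of a symmetric (0,2)-tensor `A`
and a (0,2)-tensor `B`. -/
def tach2 (A B : Ten2 n) : Pt n → Fin n → Fin n → Fin n → Fin n → ℝ :=
  fun x i j l m =>
  -((A x m i * B x l j - A x l i * B x m j) + (A x m j * B x i l - A x l j * B x i m))

/-- The Gödel metric on `ℝ⁴`: `g₁₁ = −a²`, `g₂₂ = (a²/2)e^{2x¹}`, `g₃₃ = −a²`,
`g₄₄ = a²`, `g₂₄ = g₄₂ = a²e^{x¹}`, all other components zero. -/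
def godel (a : ℝ) : Ten2 4 := fun x i j =>
  ![![-a^2, 0, 0, 0],
    ![0, a^2/2 * Real.exp (2 * x 0), 0, a^2 * Real.exp (x 0)],
    ![0, 0, -a^2, 0],
    ![0, a^2 * Real.exp (x 0), 0, a^2]] i j

section Infra
variable {a : ℝ}

lemma exp_two_mul' (t : ℝ) : Real.exp (2 * t) = Real.exp t * Real.exp t := by
  rw [two_mul, Real.exp_add]

lemma pderiv_const (i : Fin 4) (c : ℝ) (x : Pt 4) : pderiv i (fun _ => c) x = 0 := by
  simp [pderiv]

lemma hasFDerivAt_proj (x : Pt 4) :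
    HasFDerivAt (fun y : Pt 4 => y 0) (ContinuousLinearMap.proj (R := ℝ) (φ := fun _ : Fin 4 => ℝ) 0) x :=
  (ContinuousLinearMap.proj 0 : (Pt 4) →L[ℝ] ℝ).hasFDerivAt

lemma pderiv_comp_proj (P P' : ℝ → ℝ) (hP : ∀ t, HasDerivAt P (P' t) t)
    (i : Fin 4) (x : Pt 4) :
    pderiv i (fun y => P (y 0)) x = if i = 0 then P' (x 0) else 0 := by
  have h := (hP (x 0)).comp_hasFDerivAt x (hasFDerivAt_proj x)
  have h' : HasFDerivAt (fun y : Pt 4 => P (y 0))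
      (P' (x 0) • ContinuousLinearMap.proj (R := ℝ) (φ := fun _ : Fin 4 => ℝ) 0) x := h
  rw [pderiv, h'.fderiv]
  simp only [ContinuousLinearMap.smul_apply, ContinuousLinearMap.proj_apply, smul_eq_mul,
    Pi.single_apply]
  by_cases hi : i = 0 <;> simp [hi, eq_comm]

lemma pderiv_cexp1 (c : ℝ) (i : Fin 4) (x : Pt 4) :
    pderiv i (fun y => c * Real.exp (y 0)) x = if i = 0 then c * Real.exp (x 0) else 0 := by
  exact pderiv_comp_proj (fun t => c * Real.exp t) (fun t => c * Real.exp t)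
    (fun t => ((Real.hasDerivAt_exp t).const_mul c)) i x

lemma pderiv_cexp2 (c : ℝ) (i : Fin 4) (x : Pt 4) :
    pderiv i (fun y => c * Real.exp (2 * y 0)) x
      = if i = 0 then 2 * c * Real.exp (2 * x 0) else 0 := by
  have h : ∀ t : ℝ, HasDerivAt (fun t => c * Real.exp (2 * t)) (2 * c * Real.exp (2 * t)) t := by
    intro t
    have := (((hasDerivAt_id t).const_mul (2:ℝ)).exp).const_mul c
    simpa [mul_comm, mul_left_comm, mul_assoc] using this
  exact pderiv_comp_proj _ _ h i x

lemma pderiv_cexpneg (c : ℝ) (i : Fin 4) (x : Pt 4) :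
    pderiv i (fun y => c * Real.exp (-(y 0))) x
      = if i = 0 then -(c * Real.exp (-(x 0))) else 0 := by
  have h : ∀ t : ℝ, HasDerivAt (fun t => c * Real.exp (-t)) (-(c * Real.exp (-t))) t := by
    intro t
    have := (((hasDerivAt_id t).neg).exp).const_mul c
    simpa [mul_comm, mul_left_comm, mul_assoc] using this
  exact pderiv_comp_proj _ _ h i x

end Infra
def Gi (a : ℝ) (x : Pt 4) : Fin 4 → Fin 4 → ℝ :=
  ![![-(1/a^2), 0, 0, 0],
    ![0, -(2/(a^2 * (Real.exp (x 0) * Real.exp (x 0)))), 0, 2/(a^2 * Real.exp (x 0))],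
    ![0, 0, -(1/a^2), 0],
    ![0, 2/(a^2 * Real.exp (x 0)), 0, -(1/a^2)]]

lemma ginv_godel (a : ℝ) (ha : 0 < a) (x : Pt 4) (i j : Fin 4) :
    ginv (godel a) x i j = Gi a x i j := by
  have ha' : a ≠ 0 := ne_of_gt ha
  have hE : Real.exp (x 0) ≠ 0 := Real.exp_ne_zero _
  have key : (Matrix.of (godel a x)) * (Matrix.of (Gi a x)) = 1 := by
    ext i j
    fin_cases i <;> fin_cases j <;>
      simp [Matrix.mul_apply, Fin.sum_univ_four, godel, Gi, exp_two_mul',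
        Matrix.one_apply, Matrix.vecHead, Matrix.vecTail] <;>
      field_simp <;> ring
  rw [ginv, Matrix.inv_eq_right_inv key]
  rfl
def Gv (x : Pt 4) : Fin 4 → Fin 4 → Fin 4 → ℝ :=
![
   ![![0, 0, 0, 0],
     ![0, (1/2) * Real.exp (2 * x 0), 0, (1/2) * Real.exp (x 0)],
     ![0, 0, 0, 0],
     ![0, (1/2) * Real.exp (x 0), 0, 0]],
   ![![0, 0, 0, (-1/1) * Real.exp (-(x 0))],
     ![0, 0, 0, 0],
     ![0, 0, 0, 0],
     ![(-1/1) * Real.exp (-(x 0)), 0, 0, 0]],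
   ![![0, 0, 0, 0],
     ![0, 0, 0, 0],
     ![0, 0, 0, 0],
     ![0, 0, 0, 0]],
   ![![0, (1/2) * Real.exp (x 0), 0, (1)],
     ![(1/2) * Real.exp (x 0), 0, 0, 0],
     ![0, 0, 0, 0],
     ![(1), 0, 0, 0]]]

lemma fin4_cases {P : Fin 4 → Prop} (h0 : P 0) (h1 : P 1) (h2 : P 2) (h3 : P 3) :
    ∀ i, P i := by
  intro i
  fin_cases i
  exacts [h0, h1, h2, h3]

set_option maxHeartbeats 4000000 in
lemma christoffel_godel (a : ℝ) (ha : 0 < a) :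
    ∀ h i j : Fin 4, christoffel (godel a) h i j = fun x => Gv x h i j := by
  have ha' : a ≠ 0 := ne_of_gt ha
  apply fin4_cases <;> apply fin4_cases <;> apply fin4_cases <;>
    (funext x
     have hE : Real.exp (x 0) ≠ 0 := Real.exp_ne_zero _
     have hEn : Real.exp (-(x 0)) = (Real.exp (x 0))⁻¹ := Real.exp_neg _
     rw [christoffel, Fin.sum_univ_four]
     simp only [godel, Matrix.cons_val_zero, Matrix.cons_val_one, Matrix.head_cons,
       Matrix.cons_val_two, Matrix.cons_val_three, Matrix.tail_cons, Matrix.head_fin_const,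
       ginv_godel a ha, Gi, Gv, pderiv_const, pderiv_cexp1, pderiv_cexp2, pderiv_cexpneg]
     norm_num [hEn, exp_two_mul',
       show ((1:Fin 4) = 0) ↔ False from by decide,
       show ((2:Fin 4) = 0) ↔ False from by decide,
       show ((3:Fin 4) = 0) ↔ False from by decide]) <;>
    (try field_simp) <;> ring_nf
def Uv (x : Pt 4) : Fin 4 → Fin 4 → Fin 4 → Fin 4 → ℝ :=
![
 ![  ![![0, 0, 0, 0],
   ![0, 0, 0, 0],
   ![0, 0, 0, 0],
   ![0, 0, 0, 0]],
  ![![0, (3/4) * Real.exp (2 * x 0), 0, (1/2) * Real.exp (x 0)],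
   ![(-3/4) * Real.exp (2 * x 0), 0, 0, 0],
   ![0, 0, 0, 0],
   ![(-1/2) * Real.exp (x 0), 0, 0, 0]],
  ![![0, 0, 0, 0],
   ![0, 0, 0, 0],
   ![0, 0, 0, 0],
   ![0, 0, 0, 0]],
  ![![0, (1/2) * Real.exp (x 0), 0, (1/2)],
   ![(-1/2) * Real.exp (x 0), 0, 0, 0],
   ![0, 0, 0, 0],
   ![(-1/2), 0, 0, 0]]],
 ![  ![![0, (-1/2), 0, 0],
   ![(1/2), 0, 0, 0],
   ![0, 0, 0, 0],
   ![0, 0, 0, 0]],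
  ![![0, 0, 0, 0],
   ![0, 0, 0, (1/2) * Real.exp (x 0)],
   ![0, 0, 0, 0],
   ![0, (-1/2) * Real.exp (x 0), 0, 0]],
  ![![0, 0, 0, 0],
   ![0, 0, 0, 0],
   ![0, 0, 0, 0],
   ![0, 0, 0, 0]],
  ![![0, 0, 0, 0],
   ![0, 0, 0, (1/2)],
   ![0, 0, 0, 0],
   ![0, (-1/2), 0, 0]]],
 ![  ![![0, 0, 0, 0],
   ![0, 0, 0, 0],
   ![0, 0, 0, 0],
   ![0, 0, 0, 0]],
  ![![0, 0, 0, 0],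
   ![0, 0, 0, 0],
   ![0, 0, 0, 0],
   ![0, 0, 0, 0]],
  ![![0, 0, 0, 0],
   ![0, 0, 0, 0],
   ![0, 0, 0, 0],
   ![0, 0, 0, 0]],
  ![![0, 0, 0, 0],
   ![0, 0, 0, 0],
   ![0, 0, 0, 0],
   ![0, 0, 0, 0]]],
 ![  ![![0, (1/1) * Real.exp (x 0), 0, (1/2)],
   ![(-1/1) * Real.exp (x 0), 0, 0, 0],
   ![0, 0, 0, 0],
   ![(-1/2), 0, 0, 0]],
  ![![0, 0, 0, 0],
   ![0, 0, 0, (-1/4) * Real.exp (2 * x 0)],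
   ![0, 0, 0, 0],
   ![0, (1/4) * Real.exp (2 * x 0), 0, 0]],
  ![![0, 0, 0, 0],
   ![0, 0, 0, 0],
   ![0, 0, 0, 0],
   ![0, 0, 0, 0]],
  ![![0, 0, 0, 0],
   ![0, 0, 0, (-1/2) * Real.exp (x 0)],
   ![0, 0, 0, 0],
   ![0, (1/2) * Real.exp (x 0), 0, 0]]]]

set_option maxHeartbeats 12000000 in
lemma curvUp_godel (a : ℝ) (ha : 0 < a) (x : Pt 4) :
    ∀ h i j k : Fin 4, curvUp (godel a) h i j k x = Uv x h i j k := by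
  have ha' : a ≠ 0 := ne_of_gt ha
  have hE : Real.exp (x 0) ≠ 0 := Real.exp_ne_zero _
  have hEn : Real.exp (-(x 0)) = (Real.exp (x 0))⁻¹ := Real.exp_neg _
  apply fin4_cases <;> apply fin4_cases <;> apply fin4_cases <;> apply fin4_cases <;>
    (rw [curvUp]
     simp only [Fin.sum_univ_four, christoffel_godel a ha, Gv, Uv,
       Matrix.cons_val_zero, Matrix.cons_val_one, Matrix.head_cons,
       Matrix.cons_val_two, Matrix.cons_val_three, Matrix.tail_cons, Matrix.head_fin_const,
       pderiv_const, pderiv_cexp1, pderiv_cexp2, pderiv_cexpneg]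
     norm_num [hEn, exp_two_mul',
       show ((1:Fin 4) = 0) ↔ False from by decide,
       show ((2:Fin 4) = 0) ↔ False from by decide,
       show ((3:Fin 4) = 0) ↔ False from by decide]) <;>
    (try field_simp) <;> ring_nf
def Rv (a : ℝ) (x : Pt 4) : Fin 4 → Fin 4 → Fin 4 → Fin 4 → ℝ :=
![
 ![  ![![0, 0, 0, 0],
   ![0, 0, 0, 0],
   ![0, 0, 0, 0],
   ![0, 0, 0, 0]],
  ![![0, (-3/4) * a^2 * Real.exp (2 * x 0), 0, (-1/2) * a^2 * Real.exp (x 0)],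
   ![(3/4) * a^2 * Real.exp (2 * x 0), 0, 0, 0],
   ![0, 0, 0, 0],
   ![(1/2) * a^2 * Real.exp (x 0), 0, 0, 0]],
  ![![0, 0, 0, 0],
   ![0, 0, 0, 0],
   ![0, 0, 0, 0],
   ![0, 0, 0, 0]],
  ![![0, (-1/2) * a^2 * Real.exp (x 0), 0, (-1/2) * a^2],
   ![(1/2) * a^2 * Real.exp (x 0), 0, 0, 0],
   ![0, 0, 0, 0],
   ![(1/2) * a^2, 0, 0, 0]]],
 ![  ![![0, (3/4) * a^2 * Real.exp (2 * x 0), 0, (1/2) * a^2 * Real.exp (x 0)],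
   ![(-3/4) * a^2 * Real.exp (2 * x 0), 0, 0, 0],
   ![0, 0, 0, 0],
   ![(-1/2) * a^2 * Real.exp (x 0), 0, 0, 0]],
  ![![0, 0, 0, 0],
   ![0, 0, 0, 0],
   ![0, 0, 0, 0],
   ![0, 0, 0, 0]],
  ![![0, 0, 0, 0],
   ![0, 0, 0, 0],
   ![0, 0, 0, 0],
   ![0, 0, 0, 0]],
  ![![0, 0, 0, 0],
   ![0, 0, 0, (-1/4) * a^2 * Real.exp (2 * x 0)],
   ![0, 0, 0, 0],
   ![0, (1/4) * a^2 * Real.exp (2 * x 0), 0, 0]]],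
 ![  ![![0, 0, 0, 0],
   ![0, 0, 0, 0],
   ![0, 0, 0, 0],
   ![0, 0, 0, 0]],
  ![![0, 0, 0, 0],
   ![0, 0, 0, 0],
   ![0, 0, 0, 0],
   ![0, 0, 0, 0]],
  ![![0, 0, 0, 0],
   ![0, 0, 0, 0],
   ![0, 0, 0, 0],
   ![0, 0, 0, 0]],
  ![![0, 0, 0, 0],
   ![0, 0, 0, 0],
   ![0, 0, 0, 0],
   ![0, 0, 0, 0]]],
 ![  ![![0, (1/2) * a^2 * Real.exp (x 0), 0, (1/2) * a^2],
   ![(-1/2) * a^2 * Real.exp (x 0), 0, 0, 0],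
   ![0, 0, 0, 0],
   ![(-1/2) * a^2, 0, 0, 0]],
  ![![0, 0, 0, 0],
   ![0, 0, 0, (1/4) * a^2 * Real.exp (2 * x 0)],
   ![0, 0, 0, 0],
   ![0, (-1/4) * a^2 * Real.exp (2 * x 0), 0, 0]],
  ![![0, 0, 0, 0],
   ![0, 0, 0, 0],
   ![0, 0, 0, 0],
   ![0, 0, 0, 0]],
  ![![0, 0, 0, 0],
   ![0, 0, 0, 0],
   ![0, 0, 0, 0],
   ![0, 0, 0, 0]]]]

set_option maxHeartbeats 12000000 in
lemma riemann_godel (a : ℝ) (ha : 0 < a) (x : Pt 4) :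
    ∀ h i j k : Fin 4, riemann (godel a) x h i j k = Rv a x h i j k := by
  have ha' : a ≠ 0 := ne_of_gt ha
  have hE : Real.exp (x 0) ≠ 0 := Real.exp_ne_zero _
  apply fin4_cases <;> apply fin4_cases <;> apply fin4_cases <;> apply fin4_cases <;>
    (rw [riemann]
     simp only [Fin.sum_univ_four, curvUp_godel a ha x, Uv, godel, Rv,
       Matrix.cons_val_zero, Matrix.cons_val_one, Matrix.head_cons,
       Matrix.cons_val_two, Matrix.cons_val_three, Matrix.tail_cons, Matrix.head_fin_const]
     norm_num [exp_two_mul']) <;>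
    ring_nf
set_option maxHeartbeats 4000000 in
lemma RR_t1 (a : ℝ) (ha : 0 < a) (x : Pt 4) :
    dot44 (godel a) (riemann (godel a)) (riemann (godel a)) x 0 1 0 1 1 3
      = -(1/2) * a^2 * (Real.exp (x 0) * Real.exp (x 0) * Real.exp (x 0)) := by
  have ha' : a ≠ 0 := ne_of_gt ha
  have hE : Real.exp (x 0) ≠ 0 := Real.exp_ne_zero _
  rw [dot44]
  simp only [Fin.sum_univ_four, ginv_godel a ha, Gi, riemann_godel a ha x, Rv,
    Matrix.cons_val_zero, Matrix.cons_val_one, Matrix.head_cons,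
    Matrix.cons_val_two, Matrix.cons_val_three, Matrix.tail_cons, Matrix.head_fin_const]
  simp only [exp_two_mul']
  field_simp
  ring

set_option maxHeartbeats 4000000 in
lemma RR_t2 (a : ℝ) (ha : 0 < a) (x : Pt 4) :
    dot44 (godel a) (riemann (godel a)) (riemann (godel a)) x 0 1 0 2 1 2 = 0 := by
  have ha' : a ≠ 0 := ne_of_gt ha
  have hE : Real.exp (x 0) ≠ 0 := Real.exp_ne_zero _
  rw [dot44]
  simp only [Fin.sum_univ_four, ginv_godel a ha, Gi, riemann_godel a ha x, Rv,
    Matrix.cons_val_zero, Matrix.cons_val_one, Matrix.head_cons,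
    Matrix.cons_val_two, Matrix.cons_val_three, Matrix.tail_cons, Matrix.head_fin_const]
  simp only [exp_two_mul']
  try field_simp
  try ring

set_option maxHeartbeats 4000000 in
lemma Q_t2 (a : ℝ) (ha : 0 < a) (x : Pt 4) :
    tach4 (godel a) (riemann (godel a)) x 0 1 0 2 1 2
      = -(3/4) * a^4 * (Real.exp (x 0) * Real.exp (x 0)) := by
  have ha' : a ≠ 0 := ne_of_gt ha
  have hE : Real.exp (x 0) ≠ 0 := Real.exp_ne_zero _
  rw [tach4]
  simp only [riemann_godel a ha x, Rv, godel,
    Matrix.cons_val_zero, Matrix.cons_val_one, Matrix.head_cons,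
    Matrix.cons_val_two, Matrix.cons_val_three, Matrix.tail_cons, Matrix.head_fin_const]
  simp only [exp_two_mul']
  ring
/-- The Gödel spacetime is not pseudosymmetric: at every point the
(0,6)-tensors `R·R` and `Q(g,R)` are linearly independent; in particular there is
no real number `L` with `R·R = L·Q(g,R)` at any point. -/
theorem godel_not_pseudosymmetric (a : ℝ) (ha : 0 < a) :
    (∀ x : Pt 4, LinearIndependent ℝ
      ![dot44 (godel a) (riemann (godel a)) (riemann (godel a)) x,
        tach4 (godel a) (riemann (godel a)) x]) ∧
    (∀ x : Pt 4, ¬ ∃ L : ℝ, ∀ h i j k l m : Fin 4,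
        dot44 (godel a) (riemann (godel a)) (riemann (godel a)) x h i j k l m
          = L * tach4 (godel a) (riemann (godel a)) x h i j k l m) := by
  have key : ∀ x : Pt 4, ∀ s t : ℝ,
      s • dot44 (godel a) (riemann (godel a)) (riemann (godel a)) x
        + t • tach4 (godel a) (riemann (godel a)) x = 0 → s = 0 ∧ t = 0 := by
    intro x s t hst
    have ha' : a ≠ 0 := ne_of_gt ha
    have hE : Real.exp (x 0) ≠ 0 := Real.exp_ne_zero _
    have h2 := congrFun (congrFun (congrFun (congrFun (congrFun (congrFun hst 0) 1) 0) 2) 1) 2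
    have h1 := congrFun (congrFun (congrFun (congrFun (congrFun (congrFun hst 0) 1) 0) 1) 1) 3
    simp only [Pi.add_apply, Pi.smul_apply, smul_eq_mul, Pi.zero_apply,
      RR_t2 a ha x, Q_t2 a ha x, RR_t1 a ha x, mul_zero, zero_add] at h1 h2
    have ht : t = 0 := by
      rcases mul_eq_zero.1 h2 with h | h
      · exact h
      · exfalso
        have : a ^ 4 * (Real.exp (x 0) * Real.exp (x 0)) ≠ 0 := by positivity
        apply this
        nlinarith [h]
    subst ht
    have hs : s = 0 := by
      rw [zero_mul, add_zero] at h1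
      rcases mul_eq_zero.1 h1 with h | h
      · exact h
      · exfalso
        have : a ^ 2 * (Real.exp (x 0) * Real.exp (x 0) * Real.exp (x 0)) ≠ 0 := by positivity
        apply this
        nlinarith [h]
    exact ⟨hs, rfl⟩
  constructor
  · intro x
    exact LinearIndependent.pair_iff.2 (key x)
  · intro x ⟨L, hL⟩
    have hst : (1 : ℝ) • dot44 (godel a) (riemann (godel a)) (riemann (godel a)) x
        + (-L) • tach4 (godel a) (riemann (godel a)) x = 0 := by
      funext h i j k l m
      simp only [Pi.add_apply, Pi.smul_apply, smul_eq_mul, Pi.zero_apply, one_mul, hL h i j k l m]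
      ring
    exact one_ne_zero ((key x 1 (-L) hst).1)
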